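/- Let σ_i ∈ S_{n_i} with n_i > 1 for 1 ≤ i ≤ k. Then the discrepancy of the iterated product satisfies D(σ₁ ⊗ ... ⊗ σ_k) ≤ n_k + 2·Σ_{i=1}^{k-1} n_i - 2k + 1, where D(π) = max over all pairs of intervals I, J of D_J(π(I)). -/

import Mathlib

/-- The product `σ ⊗ τ` of `σ ∈ S_n` and `τ ∈ S_m`, as a function on `{0,...,nm-1}`. -/
def otimes (n m : ℕ) (σ τ : ℕ → ℕ) : ℕ → ℕ :=
  fun x => τ (x / n) + m * σ (x % n)

/-- Iterated (left-associated) product `σ₁ ⊗ σ₂ ⊗ ⋯ ⊗ σ_k` of a list of permutations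
(with their degrees); the result is a pair (degree, permutation). -/
def prodPerm (l : List (ℕ × (ℕ → ℕ))) : ℕ × (ℕ → ℕ) :=
  l.foldl (fun p q => (p.1 * q.1, otimes p.1 q.1 p.2 q.2)) (1, id)

/-- Discrepancy `D_T(S) = | |S ∩ T| - |S||T|/N |` for finite sets of residues mod `N`. -/
noncomputable def disc (N : ℕ) (S T : Finset ℕ) : ℝ :=
  |((S ∩ T).card : ℝ) - (S.card : ℝ) * (T.card : ℝ) / N|

/-- The (cyclic) interval of `Z_N` starting at `a` of length `len`. -/
def cycInt (N a len : ℕ) : Finset ℕ :=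
  (Finset.range len).image (fun i => (a + i) % N)

/-- `D(π)`: the maximum of `D_J(π(I))` over all intervals `I, J` of `Z_N`. -/
noncomputable def DFull (N : ℕ) (π : ℕ → ℕ) : ℝ :=
  sSup {x : ℝ | ∃ a₁ l₁ a₂ l₂, l₁ ≤ N ∧ l₂ ≤ N ∧
    x = disc N ((cycInt N a₁ l₁).image π) (cycInt N a₂ l₂)}

/-!
Write `x = q * n + r` with `r < n`, so that `(σ ⊗ τ) x = τ q + m * σ r`. The number of points of
an interval `I` sent into an interval `J` then splits over the `m` blocks `q`: block `q` contributes
the count for `σ` between the part of `I` in that block and the residue class `τ q` of `J`, an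
interval of `Z_n` with at least `⌊|J| / m⌋` points. Up to a rounding term of size at most `m - 1`,
the discrepancy of `σ ⊗ τ` is thus a sum of discrepancies of `σ`. When `I` is an initial interval
every block but one is full or empty and contributes nothing, so the bound on initial intervals
grows by `m - 1` with each factor and is `∑ (n_i - 1)` after `k - 1` factors. A general interval is
a difference of two initial ones, which doubles that bound but not the rounding term of the last
factor; and a cyclic interval is either an interval or the complement of one, with the same
discrepancy.
-/

open Finset

theorem sum_range_mul_eq_sum_sum {M : Type*} [AddCommMonoid M] (n m : ℕ) (g : ℕ → M) :
    ∑ x ∈ range (n * m), g x = ∑ q ∈ range m, ∑ r ∈ range n, g (q * n + r) := by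
  induction m with
  | zero => simp
  | succ m ih => rw [Nat.mul_succ, sum_range_add, ih, sum_range_succ, mul_comm n m]

theorem abs_sum_mul_sub_le {ι : Type*} (s : Finset ι) {a b : ι → ℝ} {n f : ℝ}
    (ha : ∀ i ∈ s, 0 ≤ a i ∧ a i ≤ n) (hb : ∀ i ∈ s, f ≤ b i)
    (hsum : ∑ i ∈ s, a i ≤ n * #s) :
    |∑ i ∈ s, a i * b i - (∑ i ∈ s, a i) * (∑ i ∈ s, b i) / #s|
      ≤ n * (∑ i ∈ s, b i - #s * f) := by
  rcases s.eq_empty_or_nonempty with rfl | hs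
  · simp
  have hcard : (0 : ℝ) < #s := by exact_mod_cast hs.card_pos
  set A := ∑ i ∈ s, a i
  set ρ := ∑ i ∈ s, b i - #s * f with hρ_def
  have hρ : ρ = ∑ i ∈ s, (b i - f) := by simp [hρ_def, sum_sub_distrib]
  have hρ0 : 0 ≤ ρ := hρ ▸ sum_nonneg fun i hi => sub_nonneg.2 (hb i hi)
  have hX : ∑ i ∈ s, a i * b i = ∑ i ∈ s, a i * (b i - f) + f * A := by
    simp only [A, mul_sub, sum_sub_distrib, ← sum_mul]
    ring
  have hX0 : 0 ≤ ∑ i ∈ s, a i * (b i - f) :=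
    sum_nonneg fun i hi => mul_nonneg (ha i hi).1 (sub_nonneg.2 (hb i hi))
  have hX1 : ∑ i ∈ s, a i * (b i - f) ≤ n * ρ := by
    rw [hρ, mul_sum]
    exact sum_le_sum fun i hi => mul_le_mul_of_nonneg_right (ha i hi).2 (sub_nonneg.2 (hb i hi))
  have hY : A * (∑ i ∈ s, b i) / #s = A * ρ / #s + f * A := by
    rw [hρ_def]
    field_simp
    ring
  have hY0 : 0 ≤ A * ρ / #s :=
    div_nonneg (mul_nonneg (sum_nonneg fun i hi => (ha i hi).1) hρ0) hcard.le
  have hY1 : A * ρ / #s ≤ n * ρ := by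
    rw [div_le_iff₀ hcard]
    nlinarith
  rw [hX, hY, abs_le]
  constructor <;> linarith

noncomputable def signedDisc (N : ℕ) (π : ℕ → ℕ) (I J : Finset ℕ) : ℝ :=
  #{x ∈ I | π x ∈ J} - (#I : ℝ) * #J / N

section SignedDisc

variable {N : ℕ} {π : ℕ → ℕ} {I I' J J' : Finset ℕ}

theorem disc_image_eq_abs_signedDisc (hπ : Set.InjOn π I) :
    disc N (I.image π) J = |signedDisc N π I J| := by
  rw [disc, signedDisc, ← filter_mem_eq_inter, filter_image,
    card_image_of_injOn (hπ.mono (coe_subset.2 (filter_subset _ _))), card_image_of_injOn hπ]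

@[simp]
theorem signedDisc_empty_left : signedDisc N π ∅ J = 0 := by
  simp [signedDisc]

theorem signedDisc_sdiff_left (h : I' ⊆ I) :
    signedDisc N π (I \ I') J = signedDisc N π I J - signedDisc N π I' J := by
  have hfilter :
      {x ∈ I \ I' | π x ∈ J} = {x ∈ I | π x ∈ J} \ {x ∈ I' | π x ∈ J} := by
    ext x
    simp only [mem_filter, mem_sdiff]
    tauto
  rw [signedDisc, signedDisc, signedDisc, hfilter, card_sdiff_of_subset (filter_subset_filter _ h),
    card_sdiff_of_subset h, Nat.cast_sub (card_le_card (filter_subset_filter _ h)),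
    Nat.cast_sub (card_le_card h)]
  ring

theorem signedDisc_sdiff_right (h : J' ⊆ J) :
    signedDisc N π I (J \ J') = signedDisc N π I J - signedDisc N π I J' := by
  have hsub : {x ∈ I | π x ∈ J'} ⊆ {x ∈ I | π x ∈ J} :=
    monotone_filter_right _ fun _ _ hx => h hx
  have hfilter :
      {x ∈ I | π x ∈ J \ J'} = {x ∈ I | π x ∈ J} \ {x ∈ I | π x ∈ J'} := by
    ext x
    simp only [mem_filter, mem_sdiff]
    tauto
  rw [signedDisc, signedDisc, signedDisc, hfilter, card_sdiff_of_subset hsub,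
    card_sdiff_of_subset h, Nat.cast_sub (card_le_card hsub), Nat.cast_sub (card_le_card h)]
  ring

theorem card_filter_range_of_bijOn (hπ : Set.BijOn π (Set.Iio N) (Set.Iio N))
    (hJ : J ⊆ range N) : #{x ∈ range N | π x ∈ J} = #J := by
  refine card_nbij π (fun x hx => (mem_filter.1 hx).2) (hπ.injOn.mono fun x hx => ?_)
    fun y hy => ?_
  · simpa using (mem_filter.1 hx).1
  · obtain ⟨x, hx, rfl⟩ := hπ.surjOn (by simpa using hJ hy)
    exact ⟨x, by simpa [mem_filter] using ⟨hx, hy⟩, rfl⟩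

theorem signedDisc_range_left (hπ : Set.BijOn π (Set.Iio N) (Set.Iio N)) (hJ : J ⊆ range N) :
    signedDisc N π (range N) J = 0 := by
  rcases N.eq_zero_or_pos with rfl | hN
  · simp
  rw [signedDisc, card_filter_range_of_bijOn hπ hJ, card_range]
  field_simp
  ring

theorem signedDisc_range_right (hN : 0 < N) (hπ : ∀ x ∈ I, π x < N) :
    signedDisc N π I (range N) = 0 := by
  rw [signedDisc, filter_true_of_mem fun x hx => mem_range.2 (hπ x hx), card_range]
  field_simp
  ring

end SignedDisc

section CyclicIntervals

variable {N : ℕ}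

theorem cycInt_subset_range (hN : 0 < N) (a l : ℕ) : cycInt N a l ⊆ range N := by
  intro y hy
  obtain ⟨i, -, rfl⟩ := mem_image.1 hy
  exact mem_range.2 (Nat.mod_lt _ hN)

theorem cycInt_eq_Ico_or_range_sdiff_Ico (hN : 0 < N) {a l : ℕ} (hl : l ≤ N) :
    ∃ u v, u ≤ v ∧ v ≤ N ∧
      (cycInt N a l = Ico u v ∨ cycInt N a l = range N \ Ico u v) := by
  have ha : a % N < N := Nat.mod_lt a hN
  have hmod : ∀ i < l, (a + i) % N = if a % N + i < N then a % N + i else a % N + i - N := by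
    intro i hi
    rw [← Nat.mod_add_mod]
    split_ifs with h
    · exact Nat.mod_eq_of_lt h
    · rw [Nat.mod_eq_sub_mod (not_lt.1 h), Nat.mod_eq_of_lt (by omega)]
  have hmem : ∀ y, y ∈ cycInt N a l ↔
      ∃ i < l, (if a % N + i < N then a % N + i else a % N + i - N) = y := by
    intro y
    simp only [cycInt, mem_image, mem_range]
    exact exists_congr fun i => and_congr_right fun hi => by rw [hmod i hi]
  generalize a % N = r at ha hmem
  by_cases hfit : r + l ≤ N
  · refine ⟨r, r + l, by omega, hfit, Or.inl (ext fun y => ?_)⟩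
    rw [hmem, mem_Ico]
    constructor
    · rintro ⟨i, hi, rfl⟩
      split_ifs <;> omega
    · intro hy
      exact ⟨y - r, by omega, by split_ifs <;> omega⟩
  · refine ⟨r + l - N, r, by omega, ha.le, Or.inr (ext fun y => ?_)⟩
    rw [hmem, mem_sdiff, mem_range, mem_Ico]
    constructor
    · rintro ⟨i, hi, rfl⟩
      split_ifs <;> omega
    · intro hy
      by_cases hry : r ≤ y
      · exact ⟨y - r, by omega, by split_ifs <;> omega⟩
      · exact ⟨y + N - r, by omega, by split_ifs <;> omega⟩

theorem DFull_le_of_forall_abs_signedDisc_Ico_le (hN : 0 < N) {π : ℕ → ℕ}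
    (hπ : Set.BijOn π (Set.Iio N) (Set.Iio N)) {D : ℝ}
    (hD : ∀ u v w z, u ≤ v → v ≤ N → z ≤ N →
      |signedDisc N π (Ico u v) (Ico w z)| ≤ D) :
    DFull N π ≤ D := by
  refine Real.sSup_le ?_ ((abs_nonneg _).trans (hD 0 0 0 0 le_rfl (Nat.zero_le _) (Nat.zero_le _)))
  rintro _ ⟨a₁, l₁, a₂, l₂, hl₁, hl₂, rfl⟩
  have hIco : ∀ {u v}, v ≤ N → Ico u v ⊆ range N := fun hv x hx =>
    mem_range.2 ((mem_Ico.1 hx).2.trans_le hv)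
  obtain ⟨u, v, huv, hv, hI⟩ := cycInt_eq_Ico_or_range_sdiff_Ico hN (a := a₁) hl₁
  obtain ⟨w, z, -, hz, hJ⟩ := cycInt_eq_Ico_or_range_sdiff_Ico hN (a := a₂) hl₂
  have hJbound : |signedDisc N π (Ico u v) (cycInt N a₂ l₂)| ≤ D := by
    rcases hJ with hJ | hJ <;> rw [hJ]
    · exact hD u v w z huv hv hz
    · have hmaps : ∀ x ∈ Ico u v, π x < N := fun x hx => hπ.mapsTo (mem_range.1 (hIco hv hx))
      rw [signedDisc_sdiff_right (hIco hz), signedDisc_range_right hN hmaps, zero_sub, abs_neg]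
      exact hD u v w z huv hv hz
  rw [disc_image_eq_abs_signedDisc
    (hπ.injOn.mono fun x hx => mem_range.1 (cycInt_subset_range hN a₁ l₁ hx))]
  rcases hI with hI | hI <;> rw [hI]
  · exact hJbound
  · rw [signedDisc_sdiff_left (hIco hv), signedDisc_range_left hπ (cycInt_subset_range hN _ _),
      zero_sub, abs_neg]
    exact hJbound

end CyclicIntervals

/-- The paper's `d(π) ≤ B`, with the initial interval on the side of `I` rather than `J`. -/
def PrefixDiscBound (N : ℕ) (π : ℕ → ℕ) (B : ℝ) : Prop :=
  ∀ k ≤ N, ∀ w z, z ≤ N → |signedDisc N π (range k) (Ico w z)| ≤ B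

theorem PrefixDiscBound.nonneg {N : ℕ} {π : ℕ → ℕ} {B : ℝ} (h : PrefixDiscBound N π B) :
    0 ≤ B :=
  (abs_nonneg _).trans (h 0 (Nat.zero_le _) 0 0 (Nat.zero_le _))

/- For `x = q * n + r` with `r < n`, `x ∈ I` and `(σ ⊗ τ) x ∈ J` mean `r ∈ blockPart n q I` and
`σ r ∈ residuePart n m (τ q) J`. -/
def blockPart (n q : ℕ) (I : Finset ℕ) : Finset ℕ := {r ∈ range n | q * n + r ∈ I}

def residuePart (n m c : ℕ) (J : Finset ℕ) : Finset ℕ := {s ∈ range n | c + m * s ∈ J}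

section Product

variable {n m : ℕ} {σ τ : ℕ → ℕ}

theorem otimes_mul_add (σ τ : ℕ → ℕ) {q r : ℕ} (hr : r < n) :
    otimes n m σ τ (q * n + r) = τ q + m * σ r := by
  rw [otimes, add_comm (q * n) r, Nat.add_mul_div_right _ _ (by omega), Nat.add_mul_mod_self_right,
    Nat.div_eq_of_lt hr, Nat.mod_eq_of_lt hr, zero_add]

theorem bijOn_otimes (hσ : Set.BijOn σ (Set.Iio n) (Set.Iio n))
    (hτ : Set.BijOn τ (Set.Iio m) (Set.Iio m)) :
    Set.BijOn (otimes n m σ τ) (Set.Iio (n * m)) (Set.Iio (n * m)) := by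
  rcases n.eq_zero_or_pos with rfl | hn
  · simp
  have hdecomp : ∀ x < n * m, x / n < m ∧ x % n < n ∧
      otimes n m σ τ x = τ (x / n) + m * σ (x % n) := fun x hx =>
    ⟨(Nat.div_lt_iff_lt_mul hn).2 (by rwa [mul_comm]), Nat.mod_lt x hn, rfl⟩
  have hmaps : Set.MapsTo (otimes n m σ τ) (Set.Iio (n * m)) (Set.Iio (n * m)) := by
    intro x hx
    obtain ⟨hq, hr, hx⟩ := hdecomp x hx
    have hτq : τ (x / n) < m := hτ.mapsTo hq
    have hσr : σ (x % n) + 1 ≤ n := hσ.mapsTo hr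
    have := Nat.mul_le_mul_left m hσr
    simp only [Set.mem_Iio, hx]
    nlinarith
  refine ((Set.finite_Iio _).injOn_iff_bijOn_of_mapsTo hmaps).1 fun x hx y hy hxy => ?_
  obtain ⟨hxq, hxr, hx⟩ := hdecomp x hx
  obtain ⟨hyq, hyr, hy⟩ := hdecomp y hy
  have hτx : τ (x / n) < m := hτ.mapsTo hxq
  have hτy : τ (y / n) < m := hτ.mapsTo hyq
  rw [hx, hy] at hxy
  have hq : τ (x / n) = τ (y / n) := by
    simpa [Nat.add_mul_mod_self_left, Nat.mod_eq_of_lt hτx, Nat.mod_eq_of_lt hτy] using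
      congrArg (· % m) hxy
  have hr : σ (x % n) = σ (y % n) := Nat.eq_of_mul_eq_mul_left (n := m) (by omega) (by omega)
  rw [← Nat.div_add_mod x n, ← Nat.div_add_mod y n, hτ.injOn hxq hyq hq, hσ.injOn hxr hyr hr]

theorem card_filter_otimes (hσ : Set.MapsTo σ (Set.Iio n) (Set.Iio n)) {I : Finset ℕ}
    (hI : I ⊆ range (n * m)) (J : Finset ℕ) :
    #{x ∈ I | otimes n m σ τ x ∈ J}
      = ∑ q ∈ range m, #{r ∈ blockPart n q I | σ r ∈ residuePart n m (τ q) J} := by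
  have hfilter : {x ∈ I | otimes n m σ τ x ∈ J}
      = {x ∈ range (n * m) | x ∈ I ∧ otimes n m σ τ x ∈ J} := by
    ext x
    simp only [mem_filter]
    exact ⟨fun h => ⟨hI h.1, h⟩, And.right⟩
  rw [hfilter, card_filter, sum_range_mul_eq_sum_sum]
  refine sum_congr rfl fun q _ => ?_
  rw [blockPart, filter_filter, card_filter]
  refine sum_congr rfl fun r hr => ?_
  have hr : r < n := mem_range.1 hr
  have hσr : σ r < n := hσ hr
  simp only [otimes_mul_add σ τ hr, residuePart, mem_filter, mem_range, hσr, true_and]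

theorem sum_card_blockPart {I : Finset ℕ} (hI : I ⊆ range (n * m)) :
    ∑ q ∈ range m, #(blockPart n q I) = #I := by
  simp only [blockPart, card_filter]
  rw [← sum_range_mul_eq_sum_sum n m fun x => if x ∈ I then 1 else 0, ← card_filter,
    filter_mem_eq_inter, inter_eq_right.2 hI]

theorem sum_card_residuePart (hτ : Set.BijOn τ (Set.Iio m) (Set.Iio m)) {J : Finset ℕ}
    (hJ : J ⊆ range (n * m)) : ∑ q ∈ range m, #(residuePart n m (τ q) J) = #J := by
  rw [sum_nbij τ (fun q hq => mem_range.2 (hτ.mapsTo (mem_range.1 hq)))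
      (hτ.injOn.mono fun q hq => mem_range.1 hq)
      (fun c hc => by simpa using hτ.surjOn (mem_range.1 hc))
      (g := fun c => #(residuePart n m c J)) fun _ _ => rfl]
  simp only [residuePart, card_filter]
  simp_rw [sum_comm (s := range m), show ∀ c s, c + m * s = s * m + c from fun _ _ => by ring]
  rw [← sum_range_mul_eq_sum_sum m n fun y => if y ∈ J then 1 else 0, ← card_filter,
    filter_mem_eq_inter, inter_eq_right.2 (mul_comm n m ▸ hJ)]

/- `(w + (m - 1 - c)) / m` is `⌈(w - c) / m⌉`, computed without truncated subtraction. -/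
theorem residuePart_Ico {c w z : ℕ} (hc : c < m) (hz : z ≤ n * m) :
    residuePart n m c (Ico w z) = Ico ((w + (m - 1 - c)) / m) ((z + (m - 1 - c)) / m) := by
  have hm : 0 < m := by omega
  ext s
  have hlo : (w + (m - 1 - c)) / m ≤ s ↔ w ≤ c + m * s := by
    rw [Nat.div_le_iff_le_mul_add_pred hm]
    omega
  have hhi : s < (z + (m - 1 - c)) / m ↔ c + m * s < z := by
    rw [← not_le, Nat.div_le_iff_le_mul_add_pred hm]
    omega
  have hs : c + m * s < z → s < n := fun h =>
    (Nat.mul_lt_mul_left hm).1 (by rw [mul_comm m n]; omega)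
  simp only [residuePart, mem_filter, mem_range, mem_Ico, hlo, hhi]
  tauto

theorem exists_residuePart_Ico_eq_Ico {c w z : ℕ} (hc : c < m) (hz : z ≤ n * m) :
    ∃ s₁ s₂, s₂ ≤ n ∧ residuePart n m c (Ico w z) = Ico s₁ s₂ := by
  refine ⟨_, _, ?_, residuePart_Ico hc hz⟩
  rw [Nat.div_le_iff_le_mul_add_pred (by omega), mul_comm m n]
  omega

theorem card_Ico_div_le_card_residuePart {c w z : ℕ} (hc : c < m) (hz : z ≤ n * m) :
    #(Ico w z) / m ≤ #(residuePart n m c (Ico w z)) := by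
  rw [residuePart_Ico hc hz, Nat.card_Ico, Nat.card_Ico]
  rcases le_total w z with hwz | hzw
  · have := Nat.div_add_div_le_add_div (x := w + (m - 1 - c)) (y := z - w) (z := m)
    rw [show w + (m - 1 - c) + (z - w) = z + (m - 1 - c) by omega] at this
    omega
  · simp [Nat.sub_eq_zero_of_le hzw]

theorem abs_sum_card_blockPart_mul_card_residuePart_sub_le (hn : 0 < n) (hm : 0 < m)
    (hτ : Set.BijOn τ (Set.Iio m) (Set.Iio m)) {I : Finset ℕ} (hI : I ⊆ range (n * m))
    {w z : ℕ} (hz : z ≤ n * m) :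
    |∑ q ∈ range m, (#(blockPart n q I) : ℝ) * #(residuePart n m (τ q) (Ico w z)) / n
        - (#I : ℝ) * #(Ico w z) / (n * m)| ≤ m - 1 := by
  set J := Ico w z
  have hJ : J ⊆ range (n * m) := fun y hy => mem_range.2 ((mem_Ico.1 hy).2.trans_le hz)
  have hnR : (0 : ℝ) < n := by exact_mod_cast hn
  have key := abs_sum_mul_sub_le (range m) (n := n) (f := ((#J / m : ℕ) : ℝ))
    (a := fun q => (#(blockPart n q I) : ℝ)) (b := fun q => (#(residuePart n m (τ q) J) : ℝ))
    (fun q _ =>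
      ⟨Nat.cast_nonneg _, by exact_mod_cast (card_filter_le _ _).trans (card_range n).le⟩)
    (fun q hq => by
      exact_mod_cast card_Ico_div_le_card_residuePart (hτ.mapsTo (mem_range.1 hq)) hz)
    (by
      rw [← Nat.cast_sum, sum_card_blockPart hI, card_range]
      exact_mod_cast (card_le_card hI).trans (card_range _).le)
  simp only [← Nat.cast_sum, sum_card_blockPart hI, sum_card_residuePart hτ hJ, card_range]
    at key
  have hrem : (#J : ℝ) - m * (#J / m : ℕ) ≤ m - 1 := by
    have h1 : ((#J % m : ℕ) : ℝ) + 1 ≤ m := by exact_mod_cast Nat.mod_lt _ hm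
    have h2 : (#J : ℝ) = m * (#J / m : ℕ) + (#J % m : ℕ) := by
      exact_mod_cast (Nat.div_add_mod _ _).symm
    linarith
  have heq : ∑ q ∈ range m, (#(blockPart n q I) : ℝ) * #(residuePart n m (τ q) J) / n
        - (#I : ℝ) * #J / (n * m)
      = (∑ q ∈ range m, (#(blockPart n q I) : ℝ) * #(residuePart n m (τ q) J)
        - (#I : ℝ) * #J / m) / n := by
    rw [← sum_div, sub_div, div_div, mul_comm (m : ℝ)]
  rw [heq, abs_div, abs_of_pos hnR, div_le_iff₀ hnR, mul_comm _ (n : ℝ)]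
  exact key.trans (mul_le_mul_of_nonneg_left hrem hnR.le)

theorem blockPart_range (q x : ℕ) : blockPart n q (range x) = range (min n (x - q * n)) := by
  ext r
  simp only [blockPart, mem_filter, mem_range]
  omega

theorem blockPart_Ico (q a b : ℕ) :
    blockPart n q (Ico a b) = blockPart n q (range b) \ blockPart n q (range a) := by
  ext r
  simp only [blockPart, mem_filter, mem_sdiff, mem_range, mem_Ico]
  omega

theorem signedDisc_otimes (hσ : Set.MapsTo σ (Set.Iio n) (Set.Iio n)) {I : Finset ℕ}
    (hI : I ⊆ range (n * m)) (J : Finset ℕ) :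
    signedDisc (n * m) (otimes n m σ τ) I J
      = ∑ q ∈ range m, signedDisc n σ (blockPart n q I) (residuePart n m (τ q) J)
        + (∑ q ∈ range m, (#(blockPart n q I) : ℝ) * #(residuePart n m (τ q) J) / n
          - (#I : ℝ) * #J / (n * m)) := by
  simp only [signedDisc, sum_sub_distrib, card_filter_otimes hσ hI, Nat.cast_sum, Nat.cast_mul]
  ring

/- Only the block containing the endpoint `x` of `range x` is partial: the earlier blocks are
full and the later ones empty, and both have signed discrepancy `0`. -/
theorem PrefixDiscBound.abs_sum_signedDisc_blockPart_range_le {B : ℝ}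
    (hB : PrefixDiscBound n σ B) (hn : 0 < n) (hσ : Set.BijOn σ (Set.Iio n) (Set.Iio n))
    (hτ : Set.MapsTo τ (Set.Iio m) (Set.Iio m)) {w z : ℕ} (hz : z ≤ n * m) (x : ℕ) :
    |∑ q ∈ range m,
        signedDisc n σ (blockPart n q (range x)) (residuePart n m (τ q) (Ico w z))| ≤ B := by
  have hzero : ∀ q ∈ range m, q ≠ x / n →
      signedDisc n σ (blockPart n q (range x)) (residuePart n m (τ q) (Ico w z)) = 0 := by
    intro q _ hqx
    rw [blockPart_range]
    rcases hqx.lt_or_gt with hlt | hgt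
    · have := (Nat.le_div_iff_mul_le hn).1 hlt
      rw [min_eq_left (by rw [Nat.succ_mul] at this; omega)]
      exact signedDisc_range_left hσ (filter_subset _ _)
    · rw [Nat.sub_eq_zero_of_le ((Nat.div_lt_iff_lt_mul hn).1 hgt).le, Nat.min_zero, range_zero,
        signedDisc_empty_left]
  by_cases hx : x / n < m
  · rw [sum_eq_single_of_mem _ (mem_range.2 hx) hzero]
    obtain ⟨s₁, s₂, hs₂, hres⟩ := exists_residuePart_Ico_eq_Ico (w := w) (hτ hx) hz
    rw [blockPart_range, hres]
    exact hB _ (min_le_left _ _) _ _ hs₂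
  · rw [sum_eq_zero fun q hq => hzero q hq (by have := mem_range.1 hq; omega), abs_zero]
    exact hB.nonneg

theorem prefixDiscBound_otimes {B : ℝ} (hB : PrefixDiscBound n σ B) (hn : 0 < n) (hm : 0 < m)
    (hσ : Set.BijOn σ (Set.Iio n) (Set.Iio n)) (hτ : Set.BijOn τ (Set.Iio m) (Set.Iio m)) :
    PrefixDiscBound (n * m) (otimes n m σ τ) (B + (m - 1)) := by
  intro k hk w z hz
  rw [signedDisc_otimes hσ.mapsTo (range_subset_range.2 hk)]
  exact (abs_add_le _ _).trans (add_le_add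
    (hB.abs_sum_signedDisc_blockPart_range_le hn hσ hτ.mapsTo hz k)
    (abs_sum_card_blockPart_mul_card_residuePart_sub_le hn hm hτ (range_subset_range.2 hk) hz))

/- Writing `Ico a b` as `range b \ range a` doubles only the `σ`-part of the error, not the
rounding term. -/
theorem PrefixDiscBound.abs_signedDisc_otimes_Ico_le {B : ℝ} (hB : PrefixDiscBound n σ B)
    (hn : 0 < n) (hm : 0 < m) (hσ : Set.BijOn σ (Set.Iio n) (Set.Iio n))
    (hτ : Set.BijOn τ (Set.Iio m) (Set.Iio m)) {a b w z : ℕ} (hab : a ≤ b) (hb : b ≤ n * m)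
    (hz : z ≤ n * m) :
    |signedDisc (n * m) (otimes n m σ τ) (Ico a b) (Ico w z)| ≤ 2 * B + (m - 1) := by
  have hI : Ico a b ⊆ range (n * m) := fun x hx => mem_range.2 ((mem_Ico.1 hx).2.trans_le hb)
  set F : ℕ → ℝ := fun x => ∑ q ∈ range m,
    signedDisc n σ (blockPart n q (range x)) (residuePart n m (τ q) (Ico w z))
  have hsplit : ∑ q ∈ range m,
      signedDisc n σ (blockPart n q (Ico a b)) (residuePart n m (τ q) (Ico w z)) = F b - F a := by
    rw [← sum_sub_distrib]
    refine sum_congr rfl fun q _ => ?_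
    have hsub : blockPart n q (range a) ⊆ blockPart n q (range b) :=
      monotone_filter_right _ fun r _ => by simp only [mem_range]; omega
    rw [blockPart_Ico, signedDisc_sdiff_left hsub]
  rw [signedDisc_otimes hσ.mapsTo hI, hsplit]
  have hb' := hB.abs_sum_signedDisc_blockPart_range_le hn hσ hτ.mapsTo (w := w) hz b
  have ha' := hB.abs_sum_signedDisc_blockPart_range_le hn hσ hτ.mapsTo (w := w) hz a
  have hround := abs_sum_card_blockPart_mul_card_residuePart_sub_le hn hm hτ hI (w := w) hz
  rw [abs_le] at hb' ha' hround ⊢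
  constructor <;> linarith

end Product

theorem prodPerm_append_singleton (L : List (ℕ × (ℕ → ℕ))) (p : ℕ × (ℕ → ℕ)) :
    prodPerm (L ++ [p]) = ((prodPerm L).1 * p.1, otimes (prodPerm L).1 p.1 (prodPerm L).2 p.2) := by
  rw [prodPerm, List.foldl_append]
  rfl

theorem prodPerm_spec (L : List (ℕ × (ℕ → ℕ)))
    (hL : ∀ p ∈ L, 0 < p.1 ∧ Set.BijOn p.2 (Set.Iio p.1) (Set.Iio p.1)) :
    0 < (prodPerm L).1 ∧
      Set.BijOn (prodPerm L).2 (Set.Iio (prodPerm L).1) (Set.Iio (prodPerm L).1) ∧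
      PrefixDiscBound (prodPerm L).1 (prodPerm L).2 ((L.map Prod.fst).sum - L.length) := by
  induction L using List.reverseRecOn with
  | nil =>
    refine ⟨Nat.one_pos, Set.bijOn_id _, fun k (hk : k ≤ 1) w z (hz : z ≤ 1) => ?_⟩
    change |signedDisc 1 id (range k) (Ico w z)| ≤ _
    interval_cases k
    · simp
    · have hJ : Ico w z ⊆ range 1 := fun y hy => mem_range.2 ((mem_Ico.1 hy).2.trans_le hz)
      rw [signedDisc_range_left (Set.bijOn_id _) hJ]
      simp
  | append_singleton L p ih =>
    obtain ⟨hN, hπ, hB⟩ := ih fun q hq => hL q (List.mem_append_left _ hq)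
    obtain ⟨hm, hp⟩ := hL p (by simp)
    rw [prodPerm_append_singleton]
    refine ⟨Nat.mul_pos hN hm, bijOn_otimes hπ hp, ?_⟩
    convert prefixDiscBound_otimes hB hN hm hπ hp using 1
    simp only [List.map_append, List.map_singleton, List.sum_append, List.sum_singleton,
      List.length_append, List.length_singleton, Nat.cast_add, Nat.cast_one]
    ring

theorem DFull_prodPerm (l : List (ℕ × (ℕ → ℕ))) (hne : l ≠ [])
    (h : ∀ p ∈ l, 1 < p.1 ∧ Set.BijOn p.2 (Set.Iio p.1) (Set.Iio p.1)) :
    DFull (prodPerm l).1 (prodPerm l).2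
      ≤ 2 * ((l.map Prod.fst).sum : ℝ) - ((l.getLast hne).1 : ℝ)
          - 2 * (l.length : ℝ) + 1 := by
  obtain ⟨L, p, rfl⟩ := (List.eq_nil_or_concat' l).resolve_left hne
  have hpos : ∀ q ∈ L ++ [p], 0 < q.1 ∧ Set.BijOn q.2 (Set.Iio q.1) (Set.Iio q.1) :=
    fun q hq => ⟨Nat.zero_lt_of_lt (h q hq).1, (h q hq).2⟩
  obtain ⟨hN, hπ, hB⟩ := prodPerm_spec L fun q hq => hpos q (List.mem_append_left _ hq)
  obtain ⟨hm, hp⟩ := hpos p (by simp)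
  rw [prodPerm_append_singleton, List.getLast_append_singleton]
  refine (DFull_le_of_forall_abs_signedDisc_Ico_le (Nat.mul_pos hN hm) (bijOn_otimes hπ hp)
    fun u v w z huv hv hz => hB.abs_signedDisc_otimes_Ico_le hN hm hπ hp huv hv hz).trans_eq ?_
  simp only [List.map_append, List.map_singleton, List.sum_append, List.sum_singleton,
    List.length_append, List.length_singleton, Nat.cast_add, Nat.cast_one]
  ring
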